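/- Let (Ωᵢ, Pᵢ) be probability spaces and for each i let N_{1,i},…,N_{k,i} : Ωᵢ → ℕ be random variables. Suppose there exist λ₁,…,λ_k > 0 such that for all r₁,…,r_k ∈ ℕ, E[(N_{1,i})_{r₁}⋯(N_{k,i})_{r_k}] → λ₁^{r₁}⋯λ_k^{r_k} as i → ∞. Then for all n₁,…,n_k ∈ ℕ, Pᵢ(N_{1,i} = n₁,…,N_{k,i} = n_k) → ∏ⱼ λⱼ^{nⱼ} e^{-λⱼ}/nⱼ!. -/

import Mathlib

/-!
Inclusion–exclusion gives `1{m = n} = ∑_{r ≥ n} (-1)^(r-n) C(r,n) C(m,r)`, and truncating after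
`r = n + L` (Bonferroni) errs by at most the first omitted term `e(m) = C(n+L+1, n) C(m, n+L+1)`.
Since `|∏ aⱼ - ∏ bⱼ| ≤ ∏ (1 + eⱼ) - 1` whenever `|aⱼ| ≤ 1` and `|aⱼ - bⱼ| ≤ eⱼ`, taking
expectations approximates `P(N = n)` by a finite combination of binomial moments
`E ∏ C(Nⱼ, rⱼ) = E ∏ (Nⱼ)_{rⱼ} / rⱼ!`, with error at most `E ∏ (1 + eⱼ(Nⱼ)) - 1`, itself such a
combination. The binomial moments tend to `∏ λⱼ^{rⱼ} / rⱼ!`, those of independent Poisson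
variables, so as `i → ∞` the approximation tends to a truncated Poisson series and the error
bound to `∏ (1 + C(n+L+1, n) λⱼ^(n+L+1) / (n+L+1)!) - 1`; as `L → ∞` these tend to the Poisson
probability and to `0`.
-/

open MeasureTheory Filter Finset
open scoped Nat Topology

theorem Int.abs_alternating_sum_range_choose_sub_le (p L : ℕ) :
    |∑ s ∈ Finset.range (L + 1), (-1) ^ s * (p.choose s : ℤ) - if p = 0 then 1 else 0|
      ≤ p.choose (L + 1) := by
  cases p with
  | zero => simp [sum_range_succ']
  | succ q =>
    rw [Int.alternating_sum_range_choose_eq_choose, if_neg q.succ_ne_zero, sub_zero, abs_mul,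
      abs_pow, abs_neg, abs_one, one_pow, one_mul, Nat.abs_cast, Nat.choose_succ_succ']
    exact_mod_cast Nat.le_add_right _ _

theorem Int.abs_sum_Icc_alternating_choose_mul_choose_sub_le (m n L : ℕ) :
    |∑ r ∈ Icc n (n + L), (-1) ^ (r - n) * (r.choose n : ℤ) * m.choose r
        - if m = n then 1 else 0|
      ≤ (n + L + 1).choose n * m.choose (n + L + 1) := by
  have hsum : ∑ r ∈ Icc n (n + L), (-1) ^ (r - n) * (r.choose n : ℤ) * m.choose r
      = m.choose n * ∑ s ∈ Finset.range (L + 1), (-1) ^ s * ((m - n).choose s : ℤ) := by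
    rw [← Ico_add_one_right_eq_Icc, sum_Ico_eq_sum_range, mul_sum,
      show n + L + 1 - n = L + 1 by omega]
    refine sum_congr rfl fun s _ => ?_
    have := Nat.choose_mul (n := m) (k := n + s) (s := n) (Nat.le_add_right n s)
    rw [Nat.add_sub_cancel_left] at this ⊢
    rw [mul_assoc, ← Nat.cast_mul, mul_comm (Nat.choose _ _), this]
    push_cast
    ring
  have hind : (if m = n then 1 else 0 : ℤ) = m.choose n * if m - n = 0 then 1 else 0 := by
    rcases lt_trichotomy m n with h | rfl | h
    · simp [Nat.choose_eq_zero_of_lt h, h.ne]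
    · simp
    · simp [h.ne', Nat.sub_ne_zero_of_lt h]
  have herr :
      (n + L + 1).choose n * m.choose (n + L + 1) = m.choose n * (m - n).choose (L + 1) := by
    rw [mul_comm, Nat.choose_mul (by omega), show n + L + 1 - n = L + 1 by omega]
  rw [hsum, hind, ← mul_sub, abs_mul, Nat.abs_cast, ← Nat.cast_mul, herr, Nat.cast_mul]
  exact mul_le_mul_of_nonneg_left (Int.abs_alternating_sum_range_choose_sub_le _ L)
    (by positivity)

theorem abs_prod_sub_prod_le_prod_one_add_sub_one {ι : Type*} (s : Finset ι) {a b e : ι → ℝ}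
    (ha : ∀ j ∈ s, |a j| ≤ 1) (hab : ∀ j ∈ s, |a j - b j| ≤ e j) :
    |∏ j ∈ s, a j - ∏ j ∈ s, b j| ≤ ∏ j ∈ s, (1 + e j) - 1 := by
  classical
  induction s using Finset.induction_on with
  | empty => simp
  | insert x t hx IH =>
    simp only [mem_insert, forall_eq_or_imp] at ha hab
    set A := ∏ j ∈ t, a j
    set B := ∏ j ∈ t, b j
    set E := ∏ j ∈ t, (1 + e j)
    have hAB : |A - B| ≤ E - 1 := IH ha.2 hab.2
    have hA : |A| ≤ 1 := by
      rw [abs_prod]; exact prod_le_one (fun _ _ => abs_nonneg _) ha.2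
    have hB : |B| ≤ E := by
      have := abs_sub_abs_le_abs_sub B A
      rw [abs_sub_comm] at hAB
      linarith
    rw [prod_insert hx, prod_insert hx, prod_insert hx,
      show a x * A - b x * B = a x * (A - B) + (a x - b x) * B by ring]
    calc |a x * (A - B) + (a x - b x) * B|
        ≤ |a x| * |A - B| + |a x - b x| * |B| := by
          rw [← abs_mul, ← abs_mul]; exact abs_add_le _ _
      _ ≤ 1 * (E - 1) + e x * E := by
          gcongr
          · exact ha.1
          · exact (abs_nonneg _).trans hab.1
          · exact hab.1
      _ = (1 + e x) * E - 1 := by ring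

/-- The inclusion–exclusion expansion of `if m = n then 1 else 0`, truncated after `r = n + L`. -/
def bonferroniSum (n L m : ℕ) : ℝ :=
  ∑ r ∈ Icc n (n + L), (-1) ^ (r - n) * (r.choose n : ℝ) * m.choose r

def bonferroniError (n L m : ℕ) : ℝ :=
  (n + L + 1).choose n * m.choose (n + L + 1)

theorem abs_ite_sub_bonferroniSum_le (m n L : ℕ) :
    |(if m = n then 1 else 0) - bonferroniSum n L m| ≤ bonferroniError n L m := by
  rw [abs_sub_comm, bonferroniSum, bonferroniError]
  exact_mod_cast Int.abs_sum_Icc_alternating_choose_mul_choose_sub_le m n L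

theorem one_add_bonferroniError_eq_sum (n L m : ℕ) :
    1 + bonferroniError n L m
      = ∑ r ∈ {0, n + L + 1},
          (if r = 0 then 1 else ((n + L + 1).choose n : ℝ)) * m.choose r := by
  simp [bonferroniError]

section Integral

variable {Ω ι : Type*} [MeasurableSpace Ω] {P : Measure Ω} [Fintype ι] [DecidableEq ι]
  {N : ι → Ω → ℕ}

theorem integrable_prod_sum_mul_choose (R : ι → Finset ℕ) (c : ι → ℕ → ℝ)
    (h : ∀ x ∈ Fintype.piFinset R, Integrable (fun ω => ∏ j, ((N j ω).choose (x j) : ℝ)) P) :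
    Integrable (fun ω => ∏ j, ∑ r ∈ R j, c j r * (N j ω).choose r) P := by
  simp_rw [prod_univ_sum, prod_mul_distrib]
  exact integrable_finsetSum _ fun x hx => (h x hx).const_mul _

theorem integral_prod_sum_mul_choose (R : ι → Finset ℕ) (c : ι → ℕ → ℝ)
    (h : ∀ x ∈ Fintype.piFinset R, Integrable (fun ω => ∏ j, ((N j ω).choose (x j) : ℝ)) P) :
    ∫ ω, ∏ j, ∑ r ∈ R j, c j r * (N j ω).choose r ∂P
      = ∑ x ∈ Fintype.piFinset R,
          (∏ j, c j (x j)) * ∫ ω, ∏ j, ((N j ω).choose (x j) : ℝ) ∂P := by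
  simp_rw [prod_univ_sum, prod_mul_distrib]
  rw [integral_finsetSum _ fun x hx => (h x hx).const_mul _]
  simp_rw [integral_const_mul]

theorem abs_measure_toReal_sub_integral_prod_bonferroniSum_le [IsProbabilityMeasure P]
    (hN : ∀ j, Measurable (N j)) (n : ι → ℕ) (L : ℕ)
    (hint : ∀ r ≤ fun j => n j + L + 1,
      Integrable (fun ω => ∏ j, ((N j ω).choose (r j) : ℝ)) P) :
    |(P {ω | ∀ j, N j ω = n j}).toReal - ∫ ω, ∏ j, bonferroniSum (n j) L (N j ω) ∂P|
      ≤ ∫ ω, ∏ j, (1 + bonferroniError (n j) L (N j ω)) ∂P - 1 := by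
  set s := {ω | ∀ j, N j ω = n j}
  have hs : MeasurableSet s :=
    measurableSet_setOfPred.2 <| Measurable.forall fun j =>
      measurableSet_setOfPred.1 (hN j (measurableSet_singleton (n j)))
  have hind : (fun ω => ∏ j, if N j ω = n j then (1 : ℝ) else 0) = s.indicator 1 := by
    ext ω
    simp [prod_boole, Set.indicator, s]
  have hIa : Integrable (fun ω => ∏ j, if N j ω = n j then (1 : ℝ) else 0) P :=
    hind ▸ (integrable_const 1).indicator hs
  have hIb : Integrable (fun ω => ∏ j, bonferroniSum (n j) L (N j ω)) P :=
    integrable_prod_sum_mul_choose _ _ fun x hx => hint x fun j => by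
      have := mem_Icc.1 (Fintype.mem_piFinset.1 hx j)
      show x j ≤ n j + L + 1; omega
  have hIe : Integrable (fun ω => ∏ j, (1 + bonferroniError (n j) L (N j ω))) P := by
    simp_rw [one_add_bonferroniError_eq_sum]
    exact integrable_prod_sum_mul_choose _ _ fun x hx => hint x fun j => by
      have := Fintype.mem_piFinset.1 hx j
      simp only [mem_insert, mem_singleton] at this
      show x j ≤ n j + L + 1; omega
  have hpt : ∀ ω,
      |(∏ j, if N j ω = n j then (1 : ℝ) else 0) - ∏ j, bonferroniSum (n j) L (N j ω)|
        ≤ ∏ j, (1 + bonferroniError (n j) L (N j ω)) - 1 := fun ω =>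
    abs_prod_sub_prod_le_prod_one_add_sub_one _ (fun j _ => by split_ifs <;> simp)
      fun j _ => abs_ite_sub_bonferroniSum_le _ _ _
  have hconst : ∫ ω, ∏ j, (1 + bonferroniError (n j) L (N j ω)) ∂P - 1
      = ∫ ω, (∏ j, (1 + bonferroniError (n j) L (N j ω)) - 1) ∂P := by
    rw [integral_sub hIe (integrable_const 1)]; simp
  rw [← measureReal_def, ← integral_indicator_one hs, ← hind, ← integral_sub hIa hIb, hconst]
  exact abs_integral_le_integral_abs.trans <|
    integral_mono (hIa.sub hIb).abs (hIe.sub (integrable_const 1)) hpt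

end Integral

theorem tendsto_sum_Icc_alternating_choose_mul_pow_div_factorial (x : ℝ) (n : ℕ) :
    Tendsto (fun L => ∑ r ∈ Icc n (n + L), (-1) ^ (r - n) * (r.choose n : ℝ) * (x ^ r / r !))
      atTop (𝓝 (x ^ n * Real.exp (-x) / n !)) := by
  have hsum : ∀ L, ∑ r ∈ Icc n (n + L), (-1) ^ (r - n) * (r.choose n : ℝ) * (x ^ r / r !)
      = x ^ n / n ! * ∑ s ∈ range (L + 1), (-x) ^ s / s ! := by
    intro L
    rw [← Ico_add_one_right_eq_Icc, sum_Ico_eq_sum_range, mul_sum,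
      show n + L + 1 - n = L + 1 by omega]
    refine sum_congr rfl fun s _ => ?_
    rw [Nat.add_sub_cancel_left, Nat.cast_add_choose, neg_pow, pow_add]
    field_simp
    ring
  have hexp :
      Tendsto (fun L => ∑ s ∈ range (L + 1), (-x) ^ s / s !) atTop (𝓝 (Real.exp (-x))) := by
    rw [Real.exp_eq_exp_ℝ]
    exact (NormedSpace.expSeries_div_hasSum_exp (-x)).tendsto_sum_nat.comp
      (tendsto_add_atTop_nat 1)
  simp_rw [hsum]
  convert hexp.const_mul (x ^ n / n !) using 2
  ring

theorem tendsto_choose_mul_pow_div_factorial (x : ℝ) (n : ℕ) :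
    Tendsto (fun L => ((n + L + 1).choose n : ℝ) * (x ^ (n + L + 1) / (n + L + 1)!))
      atTop (𝓝 0) := by
  have h : ∀ L, ((n + L + 1).choose n : ℝ) * (x ^ (n + L + 1) / (n + L + 1)!)
      = x ^ n / n ! * (x ^ (L + 1) / (L + 1)!) := by
    intro L
    rw [add_assoc, Nat.cast_add_choose, pow_add]
    field_simp
  simp_rw [h]
  simpa using ((FloorSemiring.tendsto_pow_div_factorial_atTop x).comp
    (tendsto_add_atTop_nat 1)).const_mul (x ^ n / n !)

theorem tendsto_of_forall_eventually_abs_sub_le {α β : Type*} {l : Filter α} {L : Filter β}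
    [L.NeBot] {u : α → ℝ} {a b : β → α → ℝ} {A B : β → ℝ} {y : ℝ}
    (ha : ∀ M, Tendsto (a M) l (𝓝 (A M))) (hb : ∀ M, Tendsto (b M) l (𝓝 (B M)))
    (hA : Tendsto A L (𝓝 y)) (hB : Tendsto B L (𝓝 0))
    (hu : ∀ M, ∀ᶠ i in l, |u i - a M i| ≤ b M i) :
    Tendsto u l (𝓝 y) := by
  rw [Metric.tendsto_nhds]
  intro ε hε
  have hε3 : 0 < ε / 3 := by positivity
  obtain ⟨M, hAM, hBM⟩ :=
    ((Metric.tendsto_nhds.1 hA _ hε3).and (hB.eventually (gt_mem_nhds hε3))).exists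
  filter_upwards [hu M, Metric.tendsto_nhds.1 (ha M) _ hε3, (hb M).eventually (gt_mem_nhds hBM)]
    with i hui hai hbi
  rw [Real.dist_eq] at hAM hai ⊢
  rw [abs_lt] at hAM hai ⊢
  rw [abs_le] at hui
  constructor <;> linarith

section Limit

variable {α ι : Type*} {l : Filter α} {Ω : α → Type*} [∀ i, MeasurableSpace (Ω i)]
  {P : ∀ i, Measure (Ω i)} [Fintype ι] {N : ∀ i, ι → Ω i → ℕ} {lam : ι → ℝ}

/-- A non-integrable function has Bochner integral `0`, so a nonzero limit of integrals forces
eventual integrability. -/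
theorem eventually_integrable_of_tendsto_integral {f : ∀ i, Ω i → ℝ} {c : ℝ}
    (h : Tendsto (fun i => ∫ ω, f i ω ∂P i) l (𝓝 c)) (hc : c ≠ 0) :
    ∀ᶠ i in l, Integrable (f i) (P i) :=
  (h.eventually_ne hc).mono fun _ => Integrable.of_integral_ne_zero

theorem tendsto_integral_prod_choose {r : ι → ℕ}
    (h : Tendsto (fun i => ∫ ω, ∏ j, ((N i j ω).descFactorial (r j) : ℝ) ∂P i) l
      (𝓝 (∏ j, lam j ^ r j))) :
    Tendsto (fun i => ∫ ω, ∏ j, ((N i j ω).choose (r j) : ℝ) ∂P i) l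
      (𝓝 (∏ j, lam j ^ r j / (r j)!)) := by
  have hchoose : ∀ j (m : ℕ), (m.choose (r j) : ℝ) = m.descFactorial (r j) / (r j)! := by
    intro j m
    rw [Nat.descFactorial_eq_factorial_mul_choose, Nat.cast_mul]
    field_simp
  simp_rw [hchoose, prod_div_distrib, integral_div]
  exact h.div_const _

theorem tendsto_integral_prod_sum_mul_choose [DecidableEq ι]
    (hint : ∀ r : ι → ℕ, ∀ᶠ i in l,
      Integrable (fun ω => ∏ j, ((N i j ω).choose (r j) : ℝ)) (P i))
    (hmom : ∀ r : ι → ℕ, Tendsto (fun i => ∫ ω, ∏ j, ((N i j ω).choose (r j) : ℝ) ∂P i) l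
      (𝓝 (∏ j, lam j ^ r j / (r j)!)))
    (R : ι → Finset ℕ) (c : ι → ℕ → ℝ) :
    Tendsto (fun i => ∫ ω, ∏ j, ∑ r ∈ R j, c j r * (N i j ω).choose r ∂P i) l
      (𝓝 (∏ j, ∑ r ∈ R j, c j r * (lam j ^ r / r !))) := by
  simp_rw [prod_univ_sum, prod_mul_distrib]
  refine Tendsto.congr' ?_ (tendsto_finsetSum _ fun x _ => (hmom x).const_mul _)
  filter_upwards [(Fintype.piFinset R).eventually_all.2 fun x _ => hint x] with i hi
  rw [← integral_prod_sum_mul_choose R c hi]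
  simp_rw [prod_univ_sum, prod_mul_distrib]

theorem tendsto_integral_prod_one_add_bonferroniError [DecidableEq ι]
    (hint : ∀ r : ι → ℕ, ∀ᶠ i in l,
      Integrable (fun ω => ∏ j, ((N i j ω).choose (r j) : ℝ)) (P i))
    (hmom : ∀ r : ι → ℕ, Tendsto (fun i => ∫ ω, ∏ j, ((N i j ω).choose (r j) : ℝ) ∂P i) l
      (𝓝 (∏ j, lam j ^ r j / (r j)!)))
    (n : ι → ℕ) (L : ℕ) :
    Tendsto (fun i => ∫ ω, ∏ j, (1 + bonferroniError (n j) L (N i j ω)) ∂P i) l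
      (𝓝 (∏ j, (1 + ((n j + L + 1).choose (n j) : ℝ)
        * (lam j ^ (n j + L + 1) / (n j + L + 1)!)))) := by
  simp_rw [one_add_bonferroniError_eq_sum]
  simpa using tendsto_integral_prod_sum_mul_choose hint hmom (fun j => {0, n j + L + 1})
    fun j r => if r = 0 then 1 else ((n j + L + 1).choose (n j) : ℝ)

end Limit

/-- The multivariate method of moments: convergence of all joint factorial moments
to `∏ λⱼ^{rⱼ}` implies joint convergence to independent Poisson distributions. -/
theorem method_of_moments_multivariate
    {Ω : ℕ → Type*} [∀ i, MeasurableSpace (Ω i)]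
    (P : ∀ i, Measure (Ω i)) [∀ i, IsProbabilityMeasure (P i)]
    (k : ℕ) (N : ∀ i, Fin k → Ω i → ℕ)
    (hN : ∀ i j, Measurable (N i j))
    (lam : Fin k → ℝ) (hlam : ∀ j, 0 < lam j)
    (hmom : ∀ r : Fin k → ℕ,
      Tendsto
        (fun i => ∫ ω, ∏ j, (Nat.descFactorial (N i j ω) (r j) : ℝ) ∂(P i))
        atTop (nhds (∏ j, lam j ^ (r j)))) :
    ∀ n : Fin k → ℕ,
      Tendsto (fun i => ((P i) {ω | ∀ j, N i j ω = n j}).toReal) atTop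
        (nhds (∏ j, lam j ^ (n j) * Real.exp (-lam j) / Nat.factorial (n j))) := by
  intro n
  have hchoose := fun r => tendsto_integral_prod_choose (hmom r)
  have hint := fun r => eventually_integrable_of_tendsto_integral (hchoose r)
    (prod_pos fun j _ => by have := hlam j; positivity).ne'
  refine tendsto_of_forall_eventually_abs_sub_le
    (fun L => tendsto_integral_prod_sum_mul_choose hint hchoose _ _)
    (fun L => (tendsto_integral_prod_one_add_bonferroniError hint hchoose n L).sub_const 1)
    (tendsto_finsetProd _ fun j _ =>
      tendsto_sum_Icc_alternating_choose_mul_pow_div_factorial (lam j) (n j)) ?_ fun L => ?_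
  · simpa using (tendsto_finsetProd _ fun j _ =>
      (tendsto_choose_mul_pow_div_factorial (lam j) (n j)).const_add 1).sub_const 1
  · filter_upwards [(Iic fun j => n j + L + 1).eventually_all.2 fun r _ => hint r] with i hi
    exact abs_measure_toReal_sub_integral_prod_bonferroniSum_le (hN i) n L
      fun r hr => hi r (mem_Iic.2 hr)
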